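/- arXiv:2308.15360 — 2 statements merged into one kernel-verified Lean document; each statement's English description precedes it below -/
import Mathlib

section
/- Let L = Φ Θ Φᵀ where Φ is the oriented incidence matrix of an undirected graph G and Θ = diag(θ_e) with independent Bernoulli(p_e) random variables θ_e. Then E[LᵀL] = E[L]ᵀE[L] + 2 Φ V Φᵀ, where V = diag(p_e(1-p_e)). -/
open Matrix Finset

/-- for the random Laplacian `L = Φ Θ Φᵀ` of an undirected graph with
independent Bernoulli(p_e) edges,
`E[LᵀL] = E[L]ᵀ E[L] + 2 Φ V Φᵀ` with `V = diag(p_e (1 - p_e))`. -/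
theorem expectation_laplacian_product {Ω : Type*} [Fintype Ω] {N m : ℕ}
    (w : Ω → ℝ) (hw : ∀ ω, 0 ≤ w ω) (hw1 : ∑ ω, w ω = 1)
    (θ : Fin m → Ω → ℝ) (p : Fin m → ℝ)
    (hθ : ∀ e ω, θ e ω = 0 ∨ θ e ω = 1)
    (hp : ∀ e, ∑ ω ∈ Finset.univ.filter (fun ω => θ e ω = 1), w ω = p e)
    (hindep : ∀ s : Finset (Fin m),
      ∑ ω, w ω * ∏ e ∈ s, θ e ω = ∏ e ∈ s, (∑ ω, w ω * θ e ω))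
    (Φ : Matrix (Fin N) (Fin m) ℝ)
    (hΦ : ∀ e, ∃ a b : Fin N, a ≠ b ∧
      ∀ i, Φ i e = if i = a then 1 else if i = b then -1 else 0) :
    (Matrix.of fun i j => ∑ ω, w ω *
        (((Φ * Matrix.diagonal (fun e => θ e ω) * Φᵀ)ᵀ
          * (Φ * Matrix.diagonal (fun e => θ e ω) * Φᵀ)) i j))
      = (Matrix.of fun i j =>
            ∑ ω, w ω * (Φ * Matrix.diagonal (fun e => θ e ω) * Φᵀ) i j)ᵀ
          * (Matrix.of fun i j =>
            ∑ ω, w ω * (Φ * Matrix.diagonal (fun e => θ e ω) * Φᵀ) i j)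
        + (2 : ℝ) • (Φ * Matrix.diagonal (fun e => p e * (1 - p e)) * Φᵀ) := by
  -- E[θ_e] = p_e
  have hEθ : ∀ e, ∑ ω, w ω * θ e ω = p e := by
    intro e
    rw [← hp e, Finset.sum_filter]
    refine Finset.sum_congr rfl fun ω _ => ?_
    rcases hθ e ω with h | h <;> simp [h]
  -- E[θ_e θ_e] = p_e
  have hE2diag : ∀ e, ∑ ω, w ω * (θ e ω * θ e ω) = p e := by
    intro e
    rw [← hEθ e]
    refine Finset.sum_congr rfl fun ω _ => ?_
    rcases hθ e ω with h | h <;> simp [h]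
  -- E[θ_e θ_f] = p_e p_f for e ≠ f
  have hE2off : ∀ e f, e ≠ f → ∑ ω, w ω * (θ e ω * θ f ω) = p e * p f := by
    intro e f hef
    have h := hindep {e, f}
    rw [Finset.prod_pair hef] at h
    simpa [Finset.prod_pair hef, hEθ] using h
  -- column norms are 2
  have hG : ∀ e, ∑ k, Φ k e * Φ k e = 2 := by
    intro e
    obtain ⟨a, b, hab, h⟩ := hΦ e
    have h2 : ∀ k, Φ k e * Φ k e
        = (if k = a then (1:ℝ) else 0) + (if k = b then 1 else 0) := by
      intro k
      rw [h k]
      split_ifs with h1 h2 h3 <;> simp_all <;> norm_num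
    rw [Finset.sum_congr rfl fun k _ => h2 k, Finset.sum_add_distrib]
    simp
    norm_num
  -- entries of Laplacian-type matrices
  have hLentry : ∀ (d : Fin m → ℝ) (i j : Fin N),
      (Φ * Matrix.diagonal d * Φᵀ) i j = ∑ e, Φ i e * d e * Φ j e := by
    intro d i j
    rw [Matrix.mul_apply]
    refine Finset.sum_congr rfl fun e _ => ?_
    rw [Matrix.mul_diagonal, Matrix.transpose_apply]
  ext i j
  simp only [Matrix.of_apply, Matrix.add_apply, Matrix.smul_apply, smul_eq_mul,
    Matrix.mul_apply, Matrix.transpose_apply, hLentry]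
  -- LHS expansion
  have expand1 :
      (∑ ω, w ω * ∑ k, (∑ e, Φ k e * θ e ω * Φ i e) * (∑ f, Φ k f * θ f ω * Φ j f))
      = ∑ e, ∑ f, ((∑ k, Φ k e * Φ k f) * (Φ i e * Φ j f))
          * (∑ ω, w ω * (θ e ω * θ f ω)) := by
    simp only [Finset.sum_mul, Finset.mul_sum]
    rw [Finset.sum_comm]
    conv_lhs => enter [2, k]; rw [Finset.sum_comm]
    conv_lhs => enter [2, k, 2, e]; rw [Finset.sum_comm]
    rw [Finset.sum_comm]
    conv_lhs => enter [2, e]; rw [Finset.sum_comm]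
    rw [Finset.sum_comm]
    conv_lhs => enter [2, e, 2, f]; rw [Finset.sum_comm]
    exact Finset.sum_congr rfl fun e _ => Finset.sum_congr rfl fun f _ =>
      Finset.sum_congr rfl fun ω _ => Finset.sum_congr rfl fun k _ => by ring
  -- expectation of L entries
  have hEL : ∀ (k i : Fin N),
      ∑ ω, w ω * ∑ e, Φ k e * θ e ω * Φ i e = ∑ e, Φ k e * Φ i e * p e := by
    intro k i
    simp only [Finset.mul_sum]
    rw [Finset.sum_comm]
    refine Finset.sum_congr rfl fun e _ => ?_
    have : ∑ ω, w ω * (Φ k e * θ e ω * Φ i e)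
        = Φ k e * Φ i e * ∑ ω, w ω * θ e ω := by
      rw [Finset.mul_sum]
      exact Finset.sum_congr rfl fun ω _ => by ring
    rw [this, hEθ]
  have expand2 :
      (∑ k, (∑ e, Φ k e * Φ i e * p e) * (∑ f, Φ k f * Φ j f * p f))
      = ∑ e, ∑ f, ((∑ k, Φ k e * Φ k f) * (Φ i e * Φ j f)) * (p e * p f) := by
    simp only [Finset.sum_mul, Finset.mul_sum]
    rw [Finset.sum_comm]
    conv_lhs => enter [2, e]; rw [Finset.sum_comm]
    rw [Finset.sum_comm]
    exact Finset.sum_congr rfl fun e _ => Finset.sum_congr rfl fun f _ =>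
      Finset.sum_congr rfl fun k _ => by ring
  rw [expand1]
  conv_rhs => enter [1, 2, k]; rw [hEL k i, hEL k j]
  rw [expand2, Finset.mul_sum, ← Finset.sum_add_distrib]
  refine Finset.sum_congr rfl fun e _ => ?_
  rw [← sub_eq_iff_eq_add', ← Finset.sum_sub_distrib, Finset.sum_eq_single e]
  · rw [hE2diag e, hG e]; ring
  · intro f _ hf
    rw [hE2off e f (Ne.symm hf)]
    exact sub_self _
  · exact fun h => absurd (Finset.mem_univ e) h
end

section
/- Let A₁,...,A_m ∈ ℝ^{n×n}, let (t_{ij}) be a row-stochastic m×m matrix of transition probabilities, and suppose there exist positive definite matrices X₁,...,X_m with Σ_j t_{ij} Aⱼᵀ Xⱼ Aⱼ - X_i ≺ 0 for all i. Then there exists ε > 0 and c > 0 such that for every mode sequence σ₀, σ₁, ... generated by the Markov chain, E[x_kᵀ x_k] ≤ c(1-ε)^k x₀ᵀx₀ for the recursion x_{k+1} = A_{σ_k} x_k, where the expectation is over the Markov chain with arbitrary initial distribution. -/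
open Matrix Finset

/-- State trajectory of a Markov jump linear system along a mode path `p`:
`x_{k+1} = A_{σ_k} x_k`. -/
def mjlsVec {n m : ℕ} (A : Fin m → Matrix (Fin n) (Fin n) ℝ) (x0 : Fin n → ℝ) :
    (k : ℕ) → (Fin (k + 1) → Fin m) → (Fin n → ℝ)
  | 0, _ => x0
  | (k + 1), p => (A (p ⟨k, by omega⟩)).mulVec (mjlsVec A x0 k (fun i => p i.castSucc))

/-- Probability weight of a mode path of a Markov chain with transition matrix `t`
and initial distribution `μ`. -/
def mjlsWt {m : ℕ} (t : Fin m → Fin m → ℝ) (μ : Fin m → ℝ) :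
    (k : ℕ) → (Fin (k + 1) → Fin m) → ℝ
  | 0, p => μ (p 0)
  | (k + 1), p =>
      mjlsWt t μ k (fun i => p i.castSucc) * t (p ⟨k, by omega⟩) (p ⟨k + 1, by omega⟩)

/-! ### Auxiliary lemmas: quadratic form bounds -/

lemma dot_self_nonneg' {n : ℕ} (x : Fin n → ℝ) : 0 ≤ x ⬝ᵥ x :=
  Finset.sum_nonneg fun _ _ => mul_self_nonneg _

lemma dot_self_eq_zero_iff' {n : ℕ} (x : Fin n → ℝ) : x ⬝ᵥ x = 0 ↔ x = 0 := by
  constructor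
  · intro h
    funext i
    exact mul_self_eq_zero.mp
      ((Finset.sum_eq_zero_iff_of_nonneg (fun i _ => mul_self_nonneg (x i))).mp h i
        (Finset.mem_univ i))
  · rintro rfl; simp

lemma dotProduct_continuous' {n : ℕ} :
    Continuous fun x : Fin n → ℝ => x ⬝ᵥ x := by
  simp only [dotProduct]
  exact continuous_finset_sum _ fun i _ => (continuous_apply i).mul (continuous_apply i)

lemma qform_continuous' {n : ℕ} (M : Matrix (Fin n) (Fin n) ℝ) :
    Continuous fun x : Fin n → ℝ => x ⬝ᵥ (M *ᵥ x) := by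
  simp only [dotProduct, mulVec]
  exact continuous_finset_sum _ fun i _ =>
    ((continuous_apply i).mul (continuous_finset_sum _ fun j _ =>
      (continuous_const.mul (continuous_apply j))))

lemma sphere_compact' {n : ℕ} :
    IsCompact {x : Fin n → ℝ | x ⬝ᵥ x = 1} := by
  apply Metric.isCompact_of_isClosed_isBounded
  · exact isClosed_eq dotProduct_continuous' continuous_const
  · rw [Metric.isBounded_iff_subset_closedBall 0]
    refine ⟨1, fun x hx => ?_⟩
    simp only [Set.mem_setOf_eq] at hx
    rw [Metric.mem_closedBall, dist_zero_right]
    rw [pi_norm_le_iff_of_nonneg zero_le_one]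
    intro i
    rw [Real.norm_eq_abs, abs_le_one_iff_mul_self_le_one]
    have h : x i * x i ≤ x ⬝ᵥ x :=
      Finset.single_le_sum (f := fun j => x j * x j)
        (fun j _ => mul_self_nonneg _) (Finset.mem_univ i)
    rw [hx] at h
    exact h

lemma qform_smul' {n : ℕ} (M : Matrix (Fin n) (Fin n) ℝ) (c : ℝ) (x : Fin n → ℝ) :
    (c • x) ⬝ᵥ (M *ᵥ (c • x)) = c * c * (x ⬝ᵥ (M *ᵥ x)) := by
  rw [Matrix.mulVec_smul, smul_dotProduct, dotProduct_smul]
  simp [smul_eq_mul]; ring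

lemma dot_smul_self' {n : ℕ} (c : ℝ) (x : Fin n → ℝ) :
    (c • x) ⬝ᵥ (c • x) = c * c * (x ⬝ᵥ x) := by
  rw [smul_dotProduct, dotProduct_smul]
  simp [smul_eq_mul]; ring

lemma posdef_dot_pos {n : ℕ} {M : Matrix (Fin n) (Fin n) ℝ} (hM : M.PosDef)
    {x : Fin n → ℝ} (hx : x ≠ 0) : 0 < x ⬝ᵥ (M *ᵥ x) := by
  have := hM.re_dotProduct_pos hx
  simpa using this

lemma sphere_nonempty' {n : ℕ} (hn : 0 < n) :
    ({x : Fin n → ℝ | x ⬝ᵥ x = 1}).Nonempty := by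
  refine ⟨Pi.single ⟨0, hn⟩ 1, ?_⟩
  simp [Set.mem_setOf_eq, dotProduct, Pi.single_apply]

lemma qform_lower' {n : ℕ} {M : Matrix (Fin n) (Fin n) ℝ} (hM : M.PosDef) :
    ∃ a > (0:ℝ), ∀ x : Fin n → ℝ, a * (x ⬝ᵥ x) ≤ x ⬝ᵥ (M *ᵥ x) := by
  rcases Nat.eq_zero_or_pos n with hn | hn
  · subst hn
    exact ⟨1, one_pos, fun x => by simp [dotProduct]⟩
  obtain ⟨x0, hx0K, hmin⟩ := sphere_compact'.exists_isMinOn (sphere_nonempty' hn)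
    (qform_continuous' M).continuousOn
  have hx0ne : x0 ≠ 0 := by
    intro h
    rw [Set.mem_setOf_eq, h] at hx0K
    simp at hx0K
  refine ⟨x0 ⬝ᵥ (M *ᵥ x0), posdef_dot_pos hM hx0ne, fun x => ?_⟩
  by_cases hx : x ⬝ᵥ x = 0
  · rw [hx, mul_zero]
    rw [dot_self_eq_zero_iff'] at hx
    subst hx
    simp
  · have hs : 0 < x ⬝ᵥ x := lt_of_le_of_ne (dot_self_nonneg' x) (Ne.symm hx)
    set s := x ⬝ᵥ x with hsdef
    set c := Real.sqrt s with hcdef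
    have hc : 0 < c := Real.sqrt_pos.mpr hs
    have hcc : c * c = s := Real.mul_self_sqrt hs.le
    have hu : (c⁻¹ • x) ∈ {y : Fin n → ℝ | y ⬝ᵥ y = 1} := by
      rw [Set.mem_setOf_eq, dot_smul_self', ← hsdef]
      field_simp
      rw [sq]
      exact hcc.symm
    have h2 : x0 ⬝ᵥ (M *ᵥ x0) ≤ (c⁻¹ • x) ⬝ᵥ (M *ᵥ (c⁻¹ • x)) := hmin hu
    rw [qform_smul'] at h2
    have h3 : c * c * (x0 ⬝ᵥ (M *ᵥ x0)) ≤ c * c * (c⁻¹ * c⁻¹ * (x ⬝ᵥ (M *ᵥ x))) :=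
      mul_le_mul_of_nonneg_left h2 (by positivity)
    calc x0 ⬝ᵥ (M *ᵥ x0) * (x ⬝ᵥ x) = c * c * (x0 ⬝ᵥ (M *ᵥ x0)) := by rw [hcc]; ring
      _ ≤ c * c * (c⁻¹ * c⁻¹ * (x ⬝ᵥ (M *ᵥ x))) := h3
      _ = x ⬝ᵥ (M *ᵥ x) := by field_simp

lemma qform_upper' {n : ℕ} (M : Matrix (Fin n) (Fin n) ℝ) :
    ∃ b > (0:ℝ), ∀ x : Fin n → ℝ, x ⬝ᵥ (M *ᵥ x) ≤ b * (x ⬝ᵥ x) := by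
  rcases Nat.eq_zero_or_pos n with hn | hn
  · subst hn
    exact ⟨1, one_pos, fun x => by simp [dotProduct, mulVec]⟩
  obtain ⟨x0, hx0K, hmax⟩ := sphere_compact'.exists_isMaxOn (sphere_nonempty' hn)
    (qform_continuous' M).continuousOn
  refine ⟨max (x0 ⬝ᵥ (M *ᵥ x0)) 1, lt_of_lt_of_le one_pos (le_max_right _ _), fun x => ?_⟩
  by_cases hx : x ⬝ᵥ x = 0
  · rw [hx, mul_zero]
    rw [dot_self_eq_zero_iff'] at hx
    subst hx
    simp
  · have hs : 0 < x ⬝ᵥ x := lt_of_le_of_ne (dot_self_nonneg' x) (Ne.symm hx)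
    set s := x ⬝ᵥ x with hsdef
    set c := Real.sqrt s with hcdef
    have hc : 0 < c := Real.sqrt_pos.mpr hs
    have hcc : c * c = s := Real.mul_self_sqrt hs.le
    have hu : (c⁻¹ • x) ∈ {y : Fin n → ℝ | y ⬝ᵥ y = 1} := by
      rw [Set.mem_setOf_eq, dot_smul_self', ← hsdef]
      field_simp
      rw [sq]
      exact hcc.symm
    have h2 : (c⁻¹ • x) ⬝ᵥ (M *ᵥ (c⁻¹ • x)) ≤ x0 ⬝ᵥ (M *ᵥ x0) := hmax hu
    rw [qform_smul'] at h2
    have h3 : c * c * (c⁻¹ * c⁻¹ * (x ⬝ᵥ (M *ᵥ x))) ≤ c * c * (x0 ⬝ᵥ (M *ᵥ x0)) :=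
      mul_le_mul_of_nonneg_left h2 (by positivity)
    have h4 : x ⬝ᵥ (M *ᵥ x) ≤ (x0 ⬝ᵥ (M *ᵥ x0)) * s := by
      calc x ⬝ᵥ (M *ᵥ x) = c * c * (c⁻¹ * c⁻¹ * (x ⬝ᵥ (M *ᵥ x))) := by field_simp
        _ ≤ c * c * (x0 ⬝ᵥ (M *ᵥ x0)) := h3
        _ = (x0 ⬝ᵥ (M *ᵥ x0)) * s := by rw [hcc]; ring
    calc x ⬝ᵥ (M *ᵥ x) ≤ (x0 ⬝ᵥ (M *ᵥ x0)) * s := h4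
      _ ≤ max (x0 ⬝ᵥ (M *ᵥ x0)) 1 * s := mul_le_mul_of_nonneg_right (le_max_left _ _) hs.le

/-! ### Auxiliary lemmas: algebra of sums of matrices -/

lemma dot_sum_smul_mulVec {n m : ℕ} (c : Fin m → ℝ) (M : Fin m → Matrix (Fin n) (Fin n) ℝ)
    (z : Fin n → ℝ) :
    z ⬝ᵥ ((∑ j, c j • M j) *ᵥ z) = ∑ j, c j * (z ⬝ᵥ (M j *ᵥ z)) := by
  simp only [dotProduct, mulVec, Matrix.sum_apply, Matrix.smul_apply, smul_eq_mul,
    Finset.mul_sum, Finset.sum_mul]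
  have h1 : ∀ x : Fin n, (∑ y : Fin n, ∑ i : Fin m, z x * (c i * M i x y * z y))
      = ∑ i : Fin m, ∑ y : Fin n, z x * (c i * M i x y * z y) := fun x => Finset.sum_comm
  simp only [h1]
  rw [Finset.sum_comm]
  refine Finset.sum_congr rfl fun j _ => Finset.sum_congr rfl fun a _ =>
    Finset.sum_congr rfl fun b _ => by ring

lemma dot_mulVec_transpose' {n : ℕ} (B C : Matrix (Fin n) (Fin n) ℝ) (z : Fin n → ℝ) :
    (B *ᵥ z) ⬝ᵥ (C *ᵥ (B *ᵥ z)) = z ⬝ᵥ ((Bᵀ * C * B) *ᵥ z) := by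
  simp [dotProduct_mulVec, vecMul_transpose, ← mulVec_mulVec]

/-! ### Auxiliary lemmas: path combinatorics -/

lemma snoc_castSucc_fun {m k : ℕ} (p : Fin (k + 1) → Fin m) (j : Fin m) :
    (fun i : Fin (k + 1) => Fin.snoc (α := fun _ => Fin m) p j i.castSucc) = p := by
  funext i; simp

lemma mjlsVec_snoc {n m : ℕ} (A : Fin m → Matrix (Fin n) (Fin n) ℝ) (x0 : Fin n → ℝ)
    (k : ℕ) (p : Fin (k + 1) → Fin m) (j : Fin m) :
    mjlsVec A x0 (k + 1) (Fin.snoc p j) = (A (p (Fin.last k))).mulVec (mjlsVec A x0 k p) := by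
  rw [mjlsVec, snoc_castSucc_fun]
  have h1 : (⟨k, by omega⟩ : Fin (k + 2)) = Fin.castSucc (Fin.last k) := rfl
  rw [h1, Fin.snoc_castSucc]

lemma mjlsWt_snoc {m : ℕ} (t : Fin m → Fin m → ℝ) (μ : Fin m → ℝ)
    (k : ℕ) (p : Fin (k + 1) → Fin m) (j : Fin m) :
    mjlsWt t μ (k + 1) (Fin.snoc p j) = mjlsWt t μ k p * t (p (Fin.last k)) j := by
  rw [mjlsWt, snoc_castSucc_fun]
  have h1 : (⟨k, by omega⟩ : Fin (k + 2)) = Fin.castSucc (Fin.last k) := rfl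
  have h2 : (⟨k + 1, by omega⟩ : Fin (k + 2)) = Fin.last (k + 1) := rfl
  rw [h1, h2, Fin.snoc_castSucc, Fin.snoc_last]

def snocEquiv (m k : ℕ) : ((Fin (k + 1) → Fin m) × Fin m) ≃ (Fin (k + 2) → Fin m) where
  toFun pj := Fin.snoc pj.1 pj.2
  invFun q := (fun i => q i.castSucc, q (Fin.last (k + 1)))
  left_inv := by
    rintro ⟨p, j⟩
    simp [snoc_castSucc_fun, Fin.snoc_last]
  right_inv := by
    intro q
    exact Fin.snoc_init_self q

lemma sum_snoc {m k : ℕ} (f : (Fin (k + 2) → Fin m) → ℝ) :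
    ∑ q : Fin (k + 2) → Fin m, f q
      = ∑ p : Fin (k + 1) → Fin m, ∑ j : Fin m, f (Fin.snoc p j) := by
  rw [← Equiv.sum_comp (snocEquiv m k) f]
  rw [Fintype.sum_prod_type]
  rfl

lemma mjlsWt_nonneg {m : ℕ} (t : Fin m → Fin m → ℝ) (μ : Fin m → ℝ)
    (ht0 : ∀ i j, 0 ≤ t i j) (hμ : ∀ i, 0 ≤ μ i) :
    ∀ (k : ℕ) (p : Fin (k + 1) → Fin m), 0 ≤ mjlsWt t μ k p
  | 0, p => hμ (p 0)
  | (k + 1), _ => mul_nonneg (mjlsWt_nonneg t μ ht0 hμ k _) (ht0 _ _)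

lemma sum_fin_one {m : ℕ} (f : (Fin 1 → Fin m) → ℝ) :
    ∑ p : Fin 1 → Fin m, f p = ∑ i : Fin m, f (fun _ => i) := by
  apply Fintype.sum_equiv (Equiv.funUnique (Fin 1) (Fin m))
  intro p
  congr 1
  funext x
  fin_cases x
  rfl

/-- The Lyapunov-type quantity used in the proof: expectation of
`(A_{σ_k} x_k)ᵀ X_{σ_k} (A_{σ_k} x_k)`. -/
def mjlsW {n m : ℕ} (A : Fin m → Matrix (Fin n) (Fin n) ℝ)
    (t : Fin m → Fin m → ℝ) (μ : Fin m → ℝ) (X : Fin m → Matrix (Fin n) (Fin n) ℝ)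
    (x0 : Fin n → ℝ) (k : ℕ) : ℝ :=
  ∑ p : Fin (k + 1) → Fin m,
    mjlsWt t μ k p *
      ((A (p (Fin.last k)) *ᵥ mjlsVec A x0 k p) ⬝ᵥ
        (X (p (Fin.last k)) *ᵥ (A (p (Fin.last k)) *ᵥ mjlsVec A x0 k p)))

/-- feasibility of the coupled Lyapunov LMIs implies exponential mean-square
decay of the Markov jump linear system, for any initial distribution. -/
theorem mjls_mean_square_stability {n m : ℕ}
    (A : Fin m → Matrix (Fin n) (Fin n) ℝ)
    (t : Fin m → Fin m → ℝ) (ht0 : ∀ i j, 0 ≤ t i j) (ht1 : ∀ i, ∑ j, t i j = 1)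
    (X : Fin m → Matrix (Fin n) (Fin n) ℝ) (hX : ∀ i, (X i).PosDef)
    (hLMI : ∀ i, (-(∑ j, t i j • ((A j)ᵀ * X j * A j) - X i)).PosDef) :
    ∃ ε > (0 : ℝ), ∃ c > (0 : ℝ),
      ∀ (μ : Fin m → ℝ), (∀ i, 0 ≤ μ i) → (∑ i, μ i = 1) →
        ∀ (x0 : Fin n → ℝ) (k : ℕ),
          ∑ p : Fin (k + 1) → Fin m,
              mjlsWt t μ k p * (mjlsVec A x0 k p ⬝ᵥ mjlsVec A x0 k p)
            ≤ c * (1 - ε) ^ k * (x0 ⬝ᵥ x0) := by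
  rcases Nat.eq_zero_or_pos m with hm | hm
  · -- degenerate case: no modes, the initial distribution hypothesis is contradictory
    subst hm
    refine ⟨1/2, by norm_num, 1, by norm_num, fun μ hμ0 hμ1 => ?_⟩
    exfalso
    rw [Finset.sum_of_isEmpty] at hμ1
    norm_num at hμ1
  have : NeZero m := ⟨hm.ne'⟩
  have hne : (Finset.univ : Finset (Fin m)).Nonempty := Finset.univ_nonempty
  -- positive definite gap matrices
  have hGpd : ∀ i, (X i - ∑ j, t i j • ((A j)ᵀ * X j * A j)).PosDef := by
    intro i
    have h := hLMI i
    rwa [neg_sub] at h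
  -- quadratic form bounds
  choose aG haGpos haG using fun i => qform_lower' (hGpd i)
  choose bX hbXpos hbX using fun i => qform_upper' (X i)
  choose aX haXpos haX using fun i => qform_lower' (hX i)
  choose bZ hbZpos hbZ using fun i => qform_upper' ((A i)ᵀ * X i * A i)
  -- the decay rate
  set ε : ℝ := min (1/2) (Finset.univ.inf' hne fun i => aG i / bX i) with hεdef
  have hε0 : 0 < ε := by
    rw [hεdef]
    refine lt_min (by norm_num) ?_
    rw [Finset.lt_inf'_iff]
    exact fun i _ => div_pos (haGpos i) (hbXpos i)
  have hεhalf : ε ≤ 1/2 := min_le_left _ _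
  have h1ε : (1:ℝ)/2 ≤ 1 - ε := by linarith
  have h1ε0 : (0:ℝ) ≤ 1 - ε := by linarith
  have hεi : ∀ i, ε * bX i ≤ aG i := by
    intro i
    have h := min_le_right ((1:ℝ)/2) (Finset.univ.inf' hne fun i => aG i / bX i)
    have h2 : ε ≤ aG i / bX i :=
      le_trans h (Finset.inf'_le _ (Finset.mem_univ i))
    exact (le_div_iff₀ (hbXpos i)).mp h2
  -- uniform bounds
  set aL : ℝ := Finset.univ.inf' hne aX with haLdef
  have haL0 : 0 < aL := by
    rw [haLdef, Finset.lt_inf'_iff]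
    exact fun i _ => haXpos i
  have haL : ∀ (i : Fin m) (x : Fin n → ℝ), aL * (x ⬝ᵥ x) ≤ x ⬝ᵥ (X i *ᵥ x) := by
    intro i x
    refine le_trans ?_ (haX i x)
    exact mul_le_mul_of_nonneg_right (Finset.inf'_le _ (Finset.mem_univ i)) (dot_self_nonneg' x)
  set B : ℝ := Finset.univ.sup' hne bZ with hBdef
  have hB0 : 0 < B := by
    rw [hBdef, Finset.lt_sup'_iff]
    exact ⟨Classical.arbitrary _, Finset.mem_univ _, hbZpos _⟩
  have hB : ∀ (i : Fin m) (x : Fin n → ℝ),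
      x ⬝ᵥ (((A i)ᵀ * X i * A i) *ᵥ x) ≤ B * (x ⬝ᵥ x) := by
    intro i x
    refine le_trans (hbZ i x) ?_
    exact mul_le_mul_of_nonneg_right (Finset.le_sup' _ (Finset.mem_univ i)) (dot_self_nonneg' x)
  -- the constant c
  set c : ℝ := max 1 (2 * B / aL) with hcdef
  have hc0 : (0:ℝ) < c := lt_of_lt_of_le one_pos (le_max_left _ _)
  have hc1 : (1:ℝ) ≤ c := le_max_left _ _
  have hcB : B ≤ aL * (c * (1 - ε)) := by
    have h1 : 2 * B / aL ≤ c := le_max_right _ _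
    have h2 : 2 * B ≤ c * aL := by
      rw [div_le_iff₀ haL0] at h1
      linarith
    nlinarith
  refine ⟨ε, hε0, c, hc0, fun μ hμ0 hμ1 x0 k => ?_⟩
  -- key one-step quadratic inequality
  have key : ∀ (i : Fin m) (z : Fin n → ℝ),
      ∑ j, t i j * ((A j *ᵥ z) ⬝ᵥ (X j *ᵥ (A j *ᵥ z))) ≤ (1 - ε) * (z ⬝ᵥ (X i *ᵥ z)) := by
    intro i z
    have e1 : ∀ j, (A j *ᵥ z) ⬝ᵥ (X j *ᵥ (A j *ᵥ z)) = z ⬝ᵥ (((A j)ᵀ * X j * A j) *ᵥ z) :=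
      fun j => dot_mulVec_transpose' (A j) (X j) z
    calc ∑ j, t i j * ((A j *ᵥ z) ⬝ᵥ (X j *ᵥ (A j *ᵥ z)))
        = ∑ j, t i j * (z ⬝ᵥ (((A j)ᵀ * X j * A j) *ᵥ z)) := by
          exact Finset.sum_congr rfl fun j _ => by rw [e1 j]
      _ = z ⬝ᵥ ((∑ j, t i j • ((A j)ᵀ * X j * A j)) *ᵥ z) :=
          (dot_sum_smul_mulVec _ _ z).symm
      _ ≤ (1 - ε) * (z ⬝ᵥ (X i *ᵥ z)) := by
          have hsplit : z ⬝ᵥ ((∑ j, t i j • ((A j)ᵀ * X j * A j)) *ᵥ z)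
              = z ⬝ᵥ (X i *ᵥ z)
                - z ⬝ᵥ ((X i - ∑ j, t i j • ((A j)ᵀ * X j * A j)) *ᵥ z) := by
            rw [Matrix.sub_mulVec, dotProduct_sub]
            ring
          rw [hsplit]
          have hg := haG i z
          have hx := hbX i z
          have hzz := dot_self_nonneg' z
          have h5 : ε * (z ⬝ᵥ (X i *ᵥ z)) ≤ ε * (bX i * (z ⬝ᵥ z)) :=
            mul_le_mul_of_nonneg_left hx hε0.le
          have h6 : ε * (bX i * (z ⬝ᵥ z)) ≤ aG i * (z ⬝ᵥ z) := by
            rw [← mul_assoc]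
            exact mul_le_mul_of_nonneg_right (hεi i) hzz
          linarith
  -- the Lyapunov quantity
  have hWnn : ∀ k', 0 ≤ mjlsW A t μ X x0 k' := by
    intro k'
    refine Finset.sum_nonneg fun p _ => mul_nonneg (mjlsWt_nonneg t μ ht0 hμ0 k' p) ?_
    have := (hX (p (Fin.last k'))).posSemidef.re_dotProduct_nonneg
      (𝕜 := ℝ) (A (p (Fin.last k')) *ᵥ mjlsVec A x0 k' p)
    simpa using this
  have step : ∀ k', mjlsW A t μ X x0 (k' + 1) ≤ (1 - ε) * mjlsW A t μ X x0 k' := by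
    intro k'
    rw [mjlsW, sum_snoc]
    simp only [mjlsWt_snoc, mjlsVec_snoc, Fin.snoc_last]
    refine le_trans (Finset.sum_le_sum (fun p _ => ?_) :
      _ ≤ ∑ p : Fin (k' + 1) → Fin m, mjlsWt t μ k' p * ((1 - ε) *
        ((A (p (Fin.last k')) *ᵥ mjlsVec A x0 k' p) ⬝ᵥ
          (X (p (Fin.last k')) *ᵥ (A (p (Fin.last k')) *ᵥ mjlsVec A x0 k' p))))) ?_
    · have hkey := mul_le_mul_of_nonneg_left
        (key (p (Fin.last k')) (A (p (Fin.last k')) *ᵥ mjlsVec A x0 k' p))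
        (mjlsWt_nonneg t μ ht0 hμ0 k' p)
      refine le_trans (le_of_eq ?_) hkey
      rw [Finset.mul_sum]
      exact Finset.sum_congr rfl fun j _ => by ring
    · rw [mjlsW, Finset.mul_sum]
      exact le_of_eq (Finset.sum_congr rfl fun p _ => by ring)
  have decay : ∀ k', mjlsW A t μ X x0 k' ≤ (1 - ε) ^ k' * mjlsW A t μ X x0 0 := by
    intro k'
    induction k' with
    | zero => simp
    | succ k' ih =>
        calc mjlsW A t μ X x0 (k' + 1) ≤ (1 - ε) * mjlsW A t μ X x0 k' := step k'
          _ ≤ (1 - ε) * ((1 - ε) ^ k' * mjlsW A t μ X x0 0) :=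
              mul_le_mul_of_nonneg_left ih h1ε0
          _ = (1 - ε) ^ (k' + 1) * mjlsW A t μ X x0 0 := by ring
  have hW0 : mjlsW A t μ X x0 0 ≤ B * (x0 ⬝ᵥ x0) := by
    rw [mjlsW, sum_fin_one]
    have hterm : ∀ i : Fin m,
        mjlsWt t μ 0 (fun _ => i) *
          ((A i *ᵥ mjlsVec A x0 0 (fun _ => i)) ⬝ᵥ
            (X i *ᵥ (A i *ᵥ mjlsVec A x0 0 (fun _ => i))))
        ≤ μ i * (B * (x0 ⬝ᵥ x0)) := by
      intro i
      have h1 : mjlsWt t μ 0 (fun _ => i) = μ i := rfl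
      have h2 : mjlsVec A x0 0 (fun _ => i) = x0 := rfl
      rw [h1, h2]
      refine mul_le_mul_of_nonneg_left ?_ (hμ0 i)
      rw [dot_mulVec_transpose']
      exact hB i x0
    calc ∑ i : Fin m, mjlsWt t μ 0 (fun _ => i) *
          ((A ((fun _ => i) (Fin.last 0)) *ᵥ mjlsVec A x0 0 (fun _ => i)) ⬝ᵥ
            (X ((fun _ => i) (Fin.last 0)) *ᵥ
              (A ((fun _ => i) (Fin.last 0)) *ᵥ mjlsVec A x0 0 (fun _ => i))))
        ≤ ∑ i : Fin m, μ i * (B * (x0 ⬝ᵥ x0)) := Finset.sum_le_sum fun i _ => hterm i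
      _ = B * (x0 ⬝ᵥ x0) := by rw [← Finset.sum_mul, hμ1, one_mul]
  have hx0x0 : 0 ≤ x0 ⬝ᵥ x0 := dot_self_nonneg' x0
  -- now the actual goal
  cases k with
  | zero =>
      have hS : ∑ p : Fin 1 → Fin m, mjlsWt t μ 0 p * (mjlsVec A x0 0 p ⬝ᵥ mjlsVec A x0 0 p)
          = x0 ⬝ᵥ x0 := by
        rw [sum_fin_one]
        have : ∀ i : Fin m,
            mjlsWt t μ 0 (fun _ => i) * (mjlsVec A x0 0 (fun _ => i) ⬝ᵥ mjlsVec A x0 0 (fun _ => i))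
            = μ i * (x0 ⬝ᵥ x0) := fun i => rfl
        simp only [this]
        rw [← Finset.sum_mul, hμ1, one_mul]
      rw [hS, pow_zero, mul_one]
      nlinarith
  | succ k =>
      -- S (k+1) relates to W k
      have hS : aL * (∑ p : Fin (k + 2) → Fin m,
            mjlsWt t μ (k + 1) p * (mjlsVec A x0 (k + 1) p ⬝ᵥ mjlsVec A x0 (k + 1) p))
          ≤ mjlsW A t μ X x0 k := by
        rw [Finset.mul_sum, sum_snoc
          (f := fun p => aL * (mjlsWt t μ (k + 1) p *
            (mjlsVec A x0 (k + 1) p ⬝ᵥ mjlsVec A x0 (k + 1) p))), mjlsW]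
        refine Finset.sum_le_sum fun p _ => ?_
        have hz := mjlsVec_snoc A x0 k p
        calc ∑ j : Fin m, aL * (mjlsWt t μ (k + 1) (Fin.snoc p j) *
              (mjlsVec A x0 (k + 1) (Fin.snoc p j) ⬝ᵥ mjlsVec A x0 (k + 1) (Fin.snoc p j)))
            = ∑ j : Fin m, t (p (Fin.last k)) j * (mjlsWt t μ k p *
                (aL * ((A (p (Fin.last k)) *ᵥ mjlsVec A x0 k p) ⬝ᵥ
                  (A (p (Fin.last k)) *ᵥ mjlsVec A x0 k p)))) := by
              refine Finset.sum_congr rfl fun j _ => ?_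
              rw [mjlsWt_snoc, hz j]
              ring
          _ = mjlsWt t μ k p * (aL * ((A (p (Fin.last k)) *ᵥ mjlsVec A x0 k p) ⬝ᵥ
                (A (p (Fin.last k)) *ᵥ mjlsVec A x0 k p))) := by
              rw [← Finset.sum_mul, ht1, one_mul]
          _ ≤ mjlsWt t μ k p *
                ((A (p (Fin.last k)) *ᵥ mjlsVec A x0 k p) ⬝ᵥ
                  (X (p (Fin.last k)) *ᵥ (A (p (Fin.last k)) *ᵥ mjlsVec A x0 k p))) :=
              mul_le_mul_of_nonneg_left (haL _ _) (mjlsWt_nonneg t μ ht0 hμ0 k p)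
      have h7 : aL * (∑ p : Fin (k + 2) → Fin m,
            mjlsWt t μ (k + 1) p * (mjlsVec A x0 (k + 1) p ⬝ᵥ mjlsVec A x0 (k + 1) p))
          ≤ (1 - ε) ^ k * (B * (x0 ⬝ᵥ x0)) := by
        refine le_trans hS (le_trans (decay k) ?_)
        exact mul_le_mul_of_nonneg_left hW0 (pow_nonneg h1ε0 k)
      have h8 : (1 - ε) ^ k * (B * (x0 ⬝ᵥ x0))
          ≤ (1 - ε) ^ k * (aL * (c * (1 - ε)) * (x0 ⬝ᵥ x0)) := by
        refine mul_le_mul_of_nonneg_left ?_ (pow_nonneg h1ε0 k)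
        exact mul_le_mul_of_nonneg_right hcB hx0x0
      have h9 : aL * (∑ p : Fin (k + 2) → Fin m,
            mjlsWt t μ (k + 1) p * (mjlsVec A x0 (k + 1) p ⬝ᵥ mjlsVec A x0 (k + 1) p))
          ≤ aL * (c * (1 - ε) ^ (k + 1) * (x0 ⬝ᵥ x0)) := by
        refine le_trans h7 (le_trans h8 (le_of_eq ?_))
        ring
      exact le_of_mul_le_mul_left h9 haL0
end
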